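/- Let G = (V,E) be a graph on n vertices (n even) with positive edge weights w, let p be a positive even integer, and let α, β, M be parameters. Define W ∈ ℝ^{(C(n,2)+1)×n} and b as in the half-clique reduction: for each pair e = {i,j}, row e of W has value 2·w_e^{1/p} at columns i and j if e ∈ E (and 2α if e ∉ E), zeros elsewhere, with b_e = -w_e^{1/p} (resp. -α); the last row of W equals β·1 and b_{last} = -(n/2)β. If S ⊆ V is a clique of size n/2 with ∑_{e ⊆ S} w_e < M and z is its indicator vector, then ‖W z + b‖_p^p = (3^p - 1)·∑_{e ⊆ S, e ∈ E} w_e + α^p·Z + ∑_{e ∈ E} w_e < (3^p-1)M + α^p Z + ∑_{e∈E} w_e, where Z is the number of non-edges of G. -/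

import Mathlib

/-- The output `W z + b` of the half-clique reduction network, with rows indexed by
unordered vertex pairs (coded as ordered pairs with `e.1 < e.2`) plus one extra row.
For a pair `e`, the row value on `z` is `2 c_e (z_{e.1} + z_{e.2}) - c_e` with
`c_e = w_e^{1/p}` for edges and `c_e = α` for non-edges; the extra row gives
`β ∑ᵢ zᵢ - (n/2) β`. -/
noncomputable def halfCliqueOut (n : ℕ) (G : SimpleGraph (Fin n)) [DecidableRel G.Adj]
    (w : Fin n → Fin n → ℝ) (p : ℕ) (α β : ℝ) (z : Fin n → ℝ) :
    ({e : Fin n × Fin n // e.1 < e.2} ⊕ Unit) → ℝ :=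
  Sum.elim
    (fun e =>
      2 * (if G.Adj e.val.1 e.val.2 then w e.val.1 e.val.2 ^ ((1 : ℝ) / p) else α) *
          (z e.val.1 + z e.val.2) -
        (if G.Adj e.val.1 e.val.2 then w e.val.1 e.val.2 ^ ((1 : ℝ) / p) else α))
    (fun _ => β * (∑ i, z i) - ((n / 2 : ℕ) : ℝ) * β)

/-!
On the indicator vector of a half-size clique `S` the extra row vanishes, since
`∑ zᵢ = |S| = n/2`, and a pair row with scale `c` equals `3c` when both endpoints lie in `S`
and `±c` otherwise. As `p` is even, its `p`-th power is `3ᵖ cᵖ` or `cᵖ`, where `cᵖ = w_e` on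
edges and `cᵖ = αᵖ` on non-edges. A pair inside the clique is an edge, so the non-edges
contribute exactly `αᵖ Z`.
-/

open Finset

lemma Even.abs_two_mul_mul_boole_add_boole_sub_pow {p : ℕ} (hp : Even p) (c : ℝ)
    (P Q : Prop) [Decidable P] [Decidable Q] :
    |2 * c * ((if P then 1 else 0) + (if Q then 1 else 0)) - c| ^ p =
      (if P ∧ Q then (3 : ℝ) ^ p else 1) * c ^ p := by
  rw [hp.pow_abs]
  by_cases hP : P <;> by_cases hQ : Q <;> simp only [hP, hQ, if_true, if_false, and_self,
    and_false, false_and]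
  · rw [show 2 * c * (1 + 1) - c = 3 * c by ring, mul_pow]
  · rw [show 2 * c * (1 + 0) - c = c by ring, one_mul]
  · rw [show 2 * c * (0 + 1) - c = c by ring, one_mul]
  · rw [show 2 * c * (0 + 0) - c = -c by ring, hp.neg_pow, one_mul]

section HalfClique

variable {n : ℕ} {G : SimpleGraph (Fin n)} [DecidableRel G.Adj] {w : Fin n → Fin n → ℝ}
  {p : ℕ} {S : Finset (Fin n)}

lemma abs_halfCliqueOut_inl_pow (α β : ℝ) (hw : ∀ i j, G.Adj i j → 0 ≤ w i j) (hp : Even p)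
    (hp0 : 0 < p) (hclique : ∀ i ∈ S, ∀ j ∈ S, i ≠ j → G.Adj i j)
    (e : {e : Fin n × Fin n // e.1 < e.2}) :
    |halfCliqueOut n G w p α β (fun i => if i ∈ S then 1 else 0) (Sum.inl e)| ^ p =
      ((3 : ℝ) ^ p - 1) * (if G.Adj e.val.1 e.val.2 ∧ e.val.1 ∈ S ∧ e.val.2 ∈ S
          then w e.val.1 e.val.2 else 0) +
        α ^ p * (if ¬ G.Adj e.val.1 e.val.2 then 1 else 0) +
        (if G.Adj e.val.1 e.val.2 then w e.val.1 e.val.2 else 0) := by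
  rw [halfCliqueOut, Sum.elim_inl, hp.abs_two_mul_mul_boole_add_boole_sub_pow]
  by_cases hadj : G.Adj e.val.1 e.val.2
  · have hroot : (w e.val.1 e.val.2 ^ ((1 : ℝ) / p)) ^ p = w e.val.1 e.val.2 := by
      rw [one_div]; exact Real.rpow_inv_natCast_pow (hw _ _ hadj) hp0.ne'
    simp only [hadj, if_true, true_and, not_true, if_false, hroot]
    split_ifs <;> ring
  · have hS : ¬ (e.val.1 ∈ S ∧ e.val.2 ∈ S) := fun h =>
      hadj (hclique _ h.1 _ h.2 e.prop.ne)
    simp only [hadj, hS, if_false, false_and, not_false_eq_true, if_true]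
    ring

lemma halfCliqueOut_inr_eq_zero (w : Fin n → Fin n → ℝ) (α β : ℝ) (hcard : S.card = n / 2)
    (u : Unit) :
    halfCliqueOut n G w p α β (fun i => if i ∈ S then 1 else 0) (Sum.inr u) = 0 := by
  rw [halfCliqueOut, Sum.elim_inr, sum_boole, filter_mem_eq_inter, univ_inter, hcard, mul_comm,
    sub_self]

lemma sum_abs_halfCliqueOut_pow (α β : ℝ) (hw : ∀ i j, G.Adj i j → 0 ≤ w i j) (hp : Even p)
    (hp0 : 0 < p) (hclique : ∀ i ∈ S, ∀ j ∈ S, i ≠ j → G.Adj i j) (hcard : S.card = n / 2) :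
    (∑ r, |halfCliqueOut n G w p α β (fun i => if i ∈ S then 1 else 0) r| ^ p) =
      ((3 : ℝ) ^ p - 1) * (∑ e : {e : Fin n × Fin n // e.1 < e.2},
          if G.Adj e.val.1 e.val.2 ∧ e.val.1 ∈ S ∧ e.val.2 ∈ S then w e.val.1 e.val.2 else 0) +
        α ^ p * #{e : {e : Fin n × Fin n // e.1 < e.2} | ¬ G.Adj e.val.1 e.val.2} +
        (∑ e : {e : Fin n × Fin n // e.1 < e.2},
          if G.Adj e.val.1 e.val.2 then w e.val.1 e.val.2 else 0) := by
  simp only [Fintype.sum_sum_type, halfCliqueOut_inr_eq_zero w α β hcard,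
    abs_halfCliqueOut_inl_pow α β hw hp hp0 hclique, abs_zero, zero_pow hp0.ne', sum_const_zero,
    add_zero, sum_add_distrib, ← mul_sum, sum_boole]

end HalfClique

theorem stmt_12 (n : ℕ) (G : SimpleGraph (Fin n)) [DecidableRel G.Adj]
    (w : Fin n → Fin n → ℝ) (hw : ∀ i j, G.Adj i j → 0 < w i j)
    (p : ℕ) (hp : Even p) (hp0 : 0 < p) (α β M : ℝ) (Z : ℕ)
    (hZ : Z = (Finset.univ.filter
      (fun e : {e : Fin n × Fin n // e.1 < e.2} => ¬ G.Adj e.val.1 e.val.2)).card)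
    (S : Finset (Fin n))
    (hclique : ∀ i ∈ S, ∀ j ∈ S, i ≠ j → G.Adj i j)
    (hcard : S.card = n / 2)
    (hM : (∑ e : {e : Fin n × Fin n // e.1 < e.2},
        if G.Adj e.val.1 e.val.2 ∧ e.val.1 ∈ S ∧ e.val.2 ∈ S
          then w e.val.1 e.val.2 else 0) < M) :
    let z : Fin n → ℝ := fun i => if i ∈ S then 1 else 0
    (∑ r, |halfCliqueOut n G w p α β z r| ^ p) =
        ((3 : ℝ) ^ p - 1) * (∑ e : {e : Fin n × Fin n // e.1 < e.2},
            if G.Adj e.val.1 e.val.2 ∧ e.val.1 ∈ S ∧ e.val.2 ∈ S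
              then w e.val.1 e.val.2 else 0) +
          α ^ p * Z +
          (∑ e : {e : Fin n × Fin n // e.1 < e.2},
            if G.Adj e.val.1 e.val.2 then w e.val.1 e.val.2 else 0) ∧
      (∑ r, |halfCliqueOut n G w p α β z r| ^ p) <
        ((3 : ℝ) ^ p - 1) * M + α ^ p * Z +
          (∑ e : {e : Fin n × Fin n // e.1 < e.2},
            if G.Adj e.val.1 e.val.2 then w e.val.1 e.val.2 else 0) := by
  intro z
  subst hZ
  have hnorm := sum_abs_halfCliqueOut_pow α β (fun i j h => (hw i j h).le) hp hp0 hclique hcard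
  have h3 : (0 : ℝ) < 3 ^ p - 1 := sub_pos.2 (one_lt_pow₀ (by norm_num) hp0.ne')
  refine ⟨hnorm, hnorm ▸ ?_⟩
  gcongr
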